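/- Let A=(S,R) be a finite argumentation network and h an assignment with t ⊨_h φ for all φ∈Δ_A. Then for every x∈S: h(x)=(⊥,⊤) if and only if h(y)≠(⊤,⊤) for every y with (y,x)∈R and h(y0)=(⊥,⊤) for some y0 with (y0,x)∈R. -/

import Mathlib

/-- The three Caminada labels. -/
inductive Label where
  | in_ : Label
  | out : Label
  | und : Label
deriving DecidableEq

/-- Propositional intuitionistic formulas over atoms `α`, with the
distinguished constant `nconst` (the paper's `n`). -/
inductive Form (α : Type) where
  | atom : α → Form α
  | nconst : Form α
  | top : Form α
  | bot : Form α
  | and : Form α → Form α → Form α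
  | or : Form α → Form α → Form α
  | imp : Form α → Form α → Form α
  | neg : Form α → Form α

/-- Forcing in the two-world Kripke model: world `false` is `t`, world `true`
is `s`, with `t < s` (i.e. the Bool order). `h` assigns to each atom its pair
of truth values (at `t`, at `s`). The constant `n` has value `(⊥,⊤)`. -/
def force {α : Type} (h : α → Bool × Bool) : Bool → Form α → Prop
  | w, .atom x => (if w then (h x).2 else (h x).1) = true
  | w, .nconst => w = true
  | _, .top => True
  | _, .bot => False
  | w, .and A B => force h w A ∧ force h w B
  | w, .or A B => force h w A ∨ force h w B
  | w, .imp A B => ∀ v : Bool, w ≤ v → force h v A → force h v B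
  | w, .neg A => ∀ v : Bool, w ≤ v → ¬ force h v A

/-- An assignment is legitimate when no atom gets the forbidden value `(⊤,⊥)`. -/
def Persistent {α : Type} (h : α → Bool × Bool) : Prop :=
  ∀ x, (h x).1 = true → (h x).2 = true

def bigAnd {α : Type} : List (Form α) → Form α
  | [] => .top
  | f :: fs => .and f (bigAnd fs)

def bigOr {α : Type} : List (Form α) → Form α
  | [] => .bot
  | f :: fs => .or f (bigOr fs)

/-- The list of attackers of `x` in the network `(α, R)`. -/
noncomputable def attackers {α : Type} [Fintype α] (R : α → α → Prop) [DecidableRel R] (x : α) : List α :=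
  (Finset.univ.filter (fun y => R y x)).toList

/-- (a1)  `x → (n ∨ ⋀_{yRx} ¬y)` -/
noncomputable def fa1 {α : Type} [Fintype α] (R : α → α → Prop) [DecidableRel R] (x : α) : Form α :=
  .imp (.atom x) (.or .nconst (bigAnd ((attackers R x).map (fun y => .neg (.atom y)))))

/-- (a2)  `(⋀_{yRx} ¬y) → (n ∨ x)` -/
noncomputable def fa2 {α : Type} [Fintype α] (R : α → α → Prop) [DecidableRel R] (x : α) : Form α :=
  .imp (bigAnd ((attackers R x).map (fun y => .neg (.atom y)))) (.or .nconst (.atom x))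

/-- (b1)  `¬x → (n ∨ ⋁_{yRx} y)` -/
noncomputable def fb1 {α : Type} [Fintype α] (R : α → α → Prop) [DecidableRel R] (x : α) : Form α :=
  .imp (.neg (.atom x)) (.or .nconst (bigOr ((attackers R x).map (fun y => .atom y))))

/-- (b2)  `(⋁_{yRx} y) → (¬x ∨ n)` -/
noncomputable def fb2 {α : Type} [Fintype α] (R : α → α → Prop) [DecidableRel R] (x : α) : Form α :=
  .imp (bigOr ((attackers R x).map (fun y => .atom y))) (.or (.neg (.atom x)) .nconst)

/-- `h` is a model of the theory `Δ_A`: every formula of `Δ_A` holds at `t`. -/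
def ModelsDelta {α : Type} [Fintype α] (h : α → Bool × Bool)
    (R : α → α → Prop) [DecidableRel R] : Prop :=
  ∀ x, force h false (fa1 R x) ∧ force h false (fa2 R x) ∧
    force h false (fb1 R x) ∧ force h false (fb2 R x)

/-- Caminada labelling / complete extension of the network `(α, R)`. -/
def IsCompleteExt {α : Type} (R : α → α → Prop) (l : α → Label) : Prop :=
  (∀ x, l x = .in_ ↔ ∀ y, R y x → l y = .out) ∧
  (∀ x, l x = .out ↔ ∃ y, R y x ∧ l y = .in_) ∧
  (∀ x, l x = .und ↔ ((∀ y, R y x → l y ≠ .in_) ∧ ∃ y, R y x ∧ l y = .und))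

/-- The labelling `λ_h` induced by an assignment `h`. -/
def lamOf {α : Type} (h : α → Bool × Bool) (x : α) : Label :=
  if h x = (true, true) then .in_ else if h x = (false, false) then .out else .und

/-- The assignment `h_λ` induced by a labelling `λ`. -/
def assignOf {α : Type} (l : α → Label) (x : α) : Bool × Bool :=
  match l x with
  | .in_ => (true, true)
  | .out => (false, false)
  | .und => (false, true)

section Forcing

variable {α : Type} (h : α → Bool × Bool)

@[simp]
lemma force_atom_false (x : α) : force h false (.atom x) ↔ (h x).1 = true := Iff.rfl

lemma force_neg_atom_false (x : α) : force h false (.neg (.atom x)) ↔ h x = (false, false) := by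
  simp [force, Bool.forall_bool, Prod.ext_iff]

-- Both formulas hold trivially at `s`, where `n` is forced, so only the world `t` matters.
lemma force_imp_nconst_or_false (A B : Form α) :
    force h false (.imp A (.or .nconst B)) ↔ (force h false A → force h false B) := by
  simp [force, Bool.forall_bool]

lemma force_imp_or_nconst_false (A B : Form α) :
    force h false (.imp A (.or B .nconst)) ↔ (force h false A → force h false B) := by
  simp [force, Bool.forall_bool]

lemma force_bigAnd_map (w : Bool) (L : List α) (f : α → Form α) :
    force h w (bigAnd (L.map f)) ↔ ∀ a ∈ L, force h w (f a) := by
  induction L with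
  | nil => simp [bigAnd, force]
  | cons a L ih => simp [bigAnd, force, ih]

lemma force_bigOr_map (w : Bool) (L : List α) (f : α → Form α) :
    force h w (bigOr (L.map f)) ↔ ∃ a ∈ L, force h w (f a) := by
  induction L with
  | nil => simp [bigOr, force]
  | cons a L ih => simp [bigOr, force, ih]

end Forcing

lemma Persistent.ne_true_true_iff {α : Type} {h : α → Bool × Bool} (hp : Persistent h) (x : α) :
    h x ≠ (true, true) ↔ (h x).1 = false := by
  constructor
  · intro hx
    by_contra hx1
    exact hx (Prod.ext (by simpa using hx1) (hp x (by simpa using hx1)))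
  · intro hx1 hx
    simp [hx] at hx1

@[simp]
lemma mem_attackers {α : Type} [Fintype α] (R : α → α → Prop) [DecidableRel R] (x y : α) :
    y ∈ attackers R x ↔ R y x := by
  simp [attackers]

-- Reading `(⊤,·)` as in and `(⊥,⊥)` as out, these are Caminada's conditions for in and out.
lemma modelsDelta_iff {α : Type} [Fintype α] (h : α → Bool × Bool) (R : α → α → Prop)
    [DecidableRel R] :
    ModelsDelta h R ↔ ∀ x,
      ((h x).1 = true → ∀ y, R y x → h y = (false, false)) ∧
      ((∀ y, R y x → h y = (false, false)) → (h x).1 = true) ∧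
      (h x = (false, false) → ∃ y, R y x ∧ (h y).1 = true) ∧
      ((∃ y, R y x ∧ (h y).1 = true) → h x = (false, false)) := by
  simp only [ModelsDelta, fa1, fa2, fb1, fb2, force_imp_nconst_or_false,
    force_imp_or_nconst_false, force_bigAnd_map, force_bigOr_map, force_neg_atom_false,
    force_atom_false, mem_attackers]

theorem stmt5_general {α : Type} [Fintype α] (R : α → α → Prop) [DecidableRel R]
    (h : α → Bool × Bool) (hp : Persistent h) (hm : ModelsDelta h R) :
    ∀ x, h x = (false, true) ↔
      ((∀ y, R y x → h y ≠ (true, true)) ∧ ∃ y, R y x ∧ h y = (false, true)) := by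
  intro x
  obtain ⟨ha1, ha2, hb1, hb2⟩ := (modelsDelta_iff h R).1 hm x
  simp only [hp.ne_true_true_iff]
  constructor
  · intro hx
    have hno : ∀ y, R y x → (h y).1 = false := fun y hy => by
      by_contra hy1
      simpa [hx] using hb2 ⟨y, hy, by simpa using hy1⟩
    obtain ⟨y, hy, hyo⟩ : ∃ y, R y x ∧ h y ≠ (false, false) := by
      by_contra! hall
      simpa [hx] using ha2 hall
    exact ⟨hno, y, hy, Prod.ext (hno y hy) (by simpa [Prod.ext_iff, hno y hy] using hyo)⟩
  · rintro ⟨hno, y₀, hy₀, hy₀u⟩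
    have hx1 : (h x).1 = false := by
      by_contra hx1
      simpa [hy₀u] using ha1 (by simpa using hx1) y₀ hy₀
    have hx2 : (h x).2 = true := by
      by_contra hx2
      obtain ⟨y, hy, hyt⟩ := hb1 (Prod.ext hx1 (by simpa using hx2))
      simp [hno y hy] at hyt
    exact Prod.ext hx1 hx2

/-- In any model `h` of `Δ_A`: `h(x) = (⊥,⊤)` iff no attacker of `x` has value
`(⊤,⊤)` and some attacker of `x` has value `(⊥,⊤)`. -/
theorem stmt5 {α : Type} [Fintype α] [Nonempty α] (R : α → α → Prop) [DecidableRel R]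
    (h : α → Bool × Bool) (hp : Persistent h) (hm : ModelsDelta h R) :
    ∀ x, h x = (false, true) ↔
      ((∀ y, R y x → h y ≠ (true, true)) ∧ ∃ y, R y x ∧ h y = (false, true)) :=
  stmt5_general R h hp hm
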